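/- arXiv:1607.06660 — 6 statements merged into one kernel-verified Lean document; each statement's English description precedes it below -/
import Mathlib

section
/- Let p ≥ 1, let x be a natural number with x < 2^p − 1, let e be any natural number, and set s = e mod p. Then (x · 2^e) mod (2^p − 1) = (x mod 2^(p−s)) · 2^s + ⌊x / 2^(p−s)⌋. In particular, multiplication by a power of two modulo the Mersenne number 2^p − 1 acts as a left bit-rotation of the p-bit representation of x by s positions. -/
/-!
Write `e = k p + s`. Since `2 ^ p ≡ 1` modulo `2 ^ p - 1`, multiplying by `2 ^ e` is the same as
multiplying by `2 ^ s`. Splitting `x = 2 ^ (p - s) q + r` with `r < 2 ^ (p - s)` gives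
`x 2 ^ s = q 2 ^ p + r 2 ^ s ≡ r 2 ^ s + q`, the left rotation of the `p` binary digits of `x`.
The rotation is again a `p`-digit number, and it is the all-ones number `2 ^ p - 1` only if `x` is,
so it is already the reduced residue.
-/

namespace Nat

/-- The left rotation by `s` places of the `p`-digit base-`b` expansion of `x`. -/
def rotateDigits (b p s x : ℕ) : ℕ := x % b ^ (p - s) * b ^ s + x / b ^ (p - s)

/-- In mixed radix `(A, B)`, the digit pair `(q, r)` represents `A * B - 1` exactly when both digits
are maximal. -/
theorem mul_add_lt_mul_sub_one_iff {A B q r : ℕ} (hq : q < B) (hr : r < A) :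
    A * q + r < A * B - 1 ↔ q + 1 < B ∨ r + 1 < A := by
  have hqB : A * q + A ≤ A * B := by nlinarith
  constructor
  · intro h
    by_contra! hmax
    obtain ⟨rfl, rfl⟩ : B = q + 1 ∧ A = r + 1 := ⟨by omega, by omega⟩
    have : (r + 1) * (q + 1) = (r + 1) * q + r + 1 := by ring
    omega
  · rintro (h | h)
    · have : A * q + A + A ≤ A * B := by nlinarith
      omega
    · omega

variable {b : ℕ}

theorem pow_modEq_pow_mod (hb : 0 < b) (p e : ℕ) : b ^ e ≡ b ^ (e % p) [MOD b ^ p - 1] :=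
  calc b ^ e = (b ^ p) ^ (e / p) * b ^ (e % p) := by rw [← pow_mul, ← pow_add, Nat.div_add_mod]
    _ ≡ 1 ^ (e / p) * b ^ (e % p) [MOD b ^ p - 1] :=
      ((Nat.modEq_sub (Nat.one_le_pow _ _ hb)).pow _).mul_right _
    _ = b ^ (e % p) := by rw [one_pow, one_mul]

theorem mul_pow_modEq_rotateDigits (hb : 0 < b) {p s : ℕ} (hs : s ≤ p) (x : ℕ) :
    x * b ^ s ≡ rotateDigits b p s x [MOD b ^ p - 1] :=
  calc x * b ^ s = x / b ^ (p - s) * b ^ p + x % b ^ (p - s) * b ^ s := by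
        conv_lhs => rw [← Nat.div_add_mod x (b ^ (p - s))]
        rw [← pow_sub_mul_pow b hs]
        ring
    _ ≡ x / b ^ (p - s) * 1 + x % b ^ (p - s) * b ^ s [MOD b ^ p - 1] :=
      ((Nat.modEq_sub (Nat.one_le_pow _ _ hb)).mul_left _).add_right _
    _ = rotateDigits b p s x := by rw [rotateDigits, mul_one, add_comm]

theorem rotateDigits_lt (hb : 0 < b) {p s x : ℕ} (hs : s ≤ p) (hx : x < b ^ p - 1) :
    rotateDigits b p s x < b ^ p - 1 := by
  have hpow : b ^ (p - s) * b ^ s = b ^ p := pow_sub_mul_pow b hs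
  have hlow : x % b ^ (p - s) < b ^ (p - s) := Nat.mod_lt _ (Nat.pow_pos hb)
  have hhigh : x / b ^ (p - s) < b ^ s := by
    rw [Nat.div_lt_iff_lt_mul (Nat.pow_pos hb), mul_comm, hpow]
    omega
  rw [← hpow, ← Nat.div_add_mod x (b ^ (p - s)), mul_add_lt_mul_sub_one_iff hhigh hlow] at hx
  rw [rotateDigits, ← hpow, mul_comm (b ^ (p - s)), mul_comm (x % _),
    mul_add_lt_mul_sub_one_iff hlow hhigh]
  exact hx.symm

end Nat

/-- Let `p ≥ 1`, `x < 2^p − 1`, `e` arbitrary, and `s = e mod p`.  Then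
`(x · 2^e) mod (2^p − 1) = (x mod 2^(p−s)) · 2^s + ⌊x / 2^(p−s)⌋`:
multiplication by a power of two modulo the Mersenne number `2^p − 1` acts as a
left bit-rotation of the `p`-bit representation of `x` by `s` positions. -/
theorem mul_pow_two_mod_mersenne_eq_rotate (p x e s : ℕ) (hp : 1 ≤ p)
    (hx : x < 2 ^ p - 1) (hs : s = e % p) :
    (x * 2 ^ e) % (2 ^ p - 1) = (x % 2 ^ (p - s)) * 2 ^ s + x / 2 ^ (p - s) := by
  subst hs
  have hsp : e % p ≤ p := (Nat.mod_lt e hp).le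
  calc x * 2 ^ e % (2 ^ p - 1) = x * 2 ^ (e % p) % (2 ^ p - 1) :=
        (Nat.pow_modEq_pow_mod two_pos p e).mul_left x
    _ = Nat.rotateDigits 2 p (e % p) x % (2 ^ p - 1) :=
        Nat.mul_pow_modEq_rotateDigits two_pos hsp x
    _ = Nat.rotateDigits 2 p (e % p) x := Nat.mod_eq_of_lt (Nat.rotateDigits_lt two_pos hsp hx)
end

section
/- Let 0 ≤ i < N, let 1 ≤ k ≤ i, and suppose B[j] = q for every j with i−k < j ≤ i. Then P'[i] = P'[i−k] · 2^{k·τ} mod q. -/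
/-- Prefix fingerprints modulo the Mersenne number `q = 2^τ − 1` of a sequence
of blocks `B`:  `P'[i] = Σ_{j=0}^{i} B[j]·2^((i−j)·τ) mod q`. -/
def prefixFP (τ : ℕ) (B : ℕ → ℕ) (i : ℕ) : ℕ :=
  (∑ j ∈ Finset.range (i + 1), B j * 2 ^ ((i - j) * τ)) % (2 ^ τ - 1)

/-! Since `2^τ ≡ 1 [MOD 2^τ − 1]`, every weight `2^((i−j)·τ)` of the fingerprint is `≡ 1`,
so `P'[i]` is just the block sum `Σ_{j ≤ i} B[j]` reduced mod `q`. Blocks equal to `q` contribute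
nothing to that sum, and the factor `2^(k·τ)` on the right-hand side is again `≡ 1`. -/

open Finset

theorem Nat.sum_range_modEq_of_dvd_Ico {f : ℕ → ℕ} {q m n : ℕ} (hmn : m ≤ n)
    (h : ∀ j ∈ Ico m n, q ∣ f j) : ∑ j ∈ range n, f j ≡ ∑ j ∈ range m, f j [MOD q] := by
  rw [← sum_range_add_sum_Ico f hmn]
  simpa using (Nat.modEq_zero_iff_dvd.2 (dvd_sum h)).add_left (∑ j ∈ range m, f j)

theorem two_pow_mul_modEq_one (τ m : ℕ) : 2 ^ (m * τ) ≡ 1 [MOD 2 ^ τ - 1] := by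
  simpa [mul_comm m, pow_mul] using (Nat.modEq_sub (Nat.one_le_two_pow (n := τ))).pow m

theorem prefixFP_eq_sum_mod (τ : ℕ) (B : ℕ → ℕ) (i : ℕ) :
    prefixFP τ B i = (∑ j ∈ range (i + 1), B j) % (2 ^ τ - 1) := by
  refine Nat.ModEq.sum fun j _ => ?_
  simpa using (two_pow_mul_modEq_one τ (i - j)).mul_left (B j)

theorem fp_skip_q_blocks_general (τ : ℕ) (B : ℕ → ℕ)
    (i k : ℕ)
    (hq : ∀ j, i - k < j → j ≤ i → B j = 2 ^ τ - 1) :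
    prefixFP τ B i = (prefixFP τ B (i - k) * 2 ^ (k * τ)) % (2 ^ τ - 1) := by
  have hskip : ∑ j ∈ range (i + 1), B j ≡ ∑ j ∈ range (i - k + 1), B j [MOD 2 ^ τ - 1] :=
    Nat.sum_range_modEq_of_dvd_Ico (by omega) fun j hj => by
      rw [mem_Ico] at hj
      rw [hq j (by omega) (by omega)]
  rw [prefixFP_eq_sum_mod, prefixFP_eq_sum_mod, Nat.mod_mul_mod]
  have hfactor := (two_pow_mul_modEq_one τ k).mul_left (∑ j ∈ range (i - k + 1), B j)
  rw [mul_one] at hfactor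
  exact hskip.trans hfactor.symm

/-- Let `τ ≥ 1`, `q = 2^τ − 1`, and let `B[0],…,B[N−1]` be blocks with
`0 ≤ B[i] ≤ 2^τ − 1`.  Let `0 ≤ i < N`, `1 ≤ k ≤ i`, and suppose `B[j] = q`
for every `j` with `i − k < j ≤ i`.  Then `P'[i] = P'[i−k] · 2^(k·τ) mod q`. -/
theorem fp_skip_q_blocks (τ N : ℕ) (hτ : 1 ≤ τ) (B : ℕ → ℕ)
    (hB : ∀ i < N, B i ≤ 2 ^ τ - 1)
    (i k : ℕ) (hiN : i < N) (hk : 1 ≤ k) (hki : k ≤ i)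
    (hq : ∀ j, i - k < j → j ≤ i → B j = 2 ^ τ - 1) :
    prefixFP τ B i = (prefixFP τ B (i - k) * 2 ^ (k * τ)) % (2 ^ τ - 1) :=
  fp_skip_q_blocks_general τ B i k hq
end

section
/- Define Q[i] = 1 if B[i] = q and Q[i] = 0 otherwise. Then for every 0 ≤ i < N, B[i] = Q[i]·q + (1 − Q[i]) · ((P'[i] − 2^τ · P'[i−1]) mod q), where the inner subtraction is taken modulo q with result in {0,…,q−1}. In particular, the arrays P' and Q together determine the block sequence B. -/
/-
Horner's rule `S (i+1) = B (i+1) + 2^τ · S i` for the unreduced prefix sums gives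
`P'[i] ≡ B i + 2^τ · P'[i-1] (mod q)`, so subtracting the second term recovers `B i mod q`.
That is `B i` unless `B i = q`, the one block value lost by the reduction, which `Q i` records.
-/

theorem Finset.sum_range_succ_mul_pow_sub {R : Type*} [CommSemiring R] (f : ℕ → R) (x : R)
    (i : ℕ) :
    ∑ j ∈ range (i + 2), f j * x ^ (i + 1 - j) =
      f (i + 1) + x * ∑ j ∈ range (i + 1), f j * x ^ (i - j) := by
  rw [sum_range_succ, Nat.sub_self, pow_zero, mul_one, add_comm, mul_sum]
  congr 1
  refine sum_congr rfl fun j hj => ?_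
  rw [Nat.sub_add_comm (Nat.lt_succ_iff.mp (mem_range.mp hj)), pow_succ]
  ring

theorem Nat.add_sub_mod_mod_eq_of_modEq {a b c m : ℕ} (h : a ≡ b + c [MOD m]) :
    (a + m - c % m) % m = b % m := by
  rcases m.eq_zero_or_pos with rfl | hm
  · simp only [Nat.ModEq, Nat.mod_zero] at h ⊢
    omega
  have hle : c % m ≤ a + m := (Nat.mod_lt c hm).le.trans (Nat.le_add_left m a)
  refine Nat.ModEq.add_right_cancel' (c % m) ?_
  calc a + m - c % m + c % m = a + m := Nat.sub_add_cancel hle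
    _ ≡ b + c [MOD m] := (Nat.add_mod_right a m).trans h
    _ ≡ b + c % m [MOD m] := (Nat.mod_modEq c m).symm.add_left b

theorem prefixFP_modEq (τ : ℕ) (B : ℕ → ℕ) (i : ℕ) :
    prefixFP τ B i ≡ B i + 2 ^ τ * (if i = 0 then 0 else prefixFP τ B (i - 1))
      [MOD 2 ^ τ - 1] := by
  cases i with
  | zero => simpa [prefixFP] using Nat.mod_modEq (B 0) (2 ^ τ - 1)
  | succ i =>
    simp only [prefixFP, Nat.add_sub_cancel, Nat.succ_ne_zero, if_false, mul_comm _ τ, pow_mul]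
    rw [Finset.sum_range_succ_mul_pow_sub]
    exact (Nat.mod_modEq _ _).trans (((Nat.mod_modEq _ _).symm.mul_left _).add_left _)

theorem block_eq_of_fp_and_marks_general (τ N : ℕ) (B : ℕ → ℕ)
    (hB : ∀ i < N, B i ≤ 2 ^ τ - 1)
    (Q : ℕ → ℕ) (hQ : ∀ i, Q i = if B i = 2 ^ τ - 1 then 1 else 0)
    (i : ℕ) (hiN : i < N) :
    B i = Q i * (2 ^ τ - 1) +
      (1 - Q i) *
        ((prefixFP τ B i + (2 ^ τ - 1)
            - (2 ^ τ * (if i = 0 then 0 else prefixFP τ B (i - 1))) % (2 ^ τ - 1))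
          % (2 ^ τ - 1)) := by
  rw [hQ]
  by_cases hmark : B i = 2 ^ τ - 1
  · simp [hmark]
  · have hlt : B i < 2 ^ τ - 1 := lt_of_le_of_ne (hB i hiN) hmark
    rw [if_neg hmark, Nat.add_sub_mod_mod_eq_of_modEq (prefixFP_modEq τ B i),
      Nat.mod_eq_of_lt hlt]
    simp

/-- Let `τ ≥ 1`, `q = 2^τ − 1`, and let `B[0],…,B[N−1]` be blocks with
`0 ≤ B[i] ≤ 2^τ − 1`.  Define `Q[i] = 1` if `B[i] = q` and `Q[i] = 0`
otherwise.  Then for every `0 ≤ i < N`,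
`B[i] = Q[i]·q + (1 − Q[i]) · ((P'[i] − 2^τ · P'[i−1]) mod q)`,
where the inner subtraction is taken modulo `q` with result in `{0,…,q−1}`
and `P'[−1] = 0`. -/
theorem block_eq_of_fp_and_marks (τ N : ℕ) (hτ : 1 ≤ τ) (B : ℕ → ℕ)
    (hB : ∀ i < N, B i ≤ 2 ^ τ - 1)
    (Q : ℕ → ℕ) (hQ : ∀ i, Q i = if B i = 2 ^ τ - 1 then 1 else 0)
    (i : ℕ) (hiN : i < N) :
    B i = Q i * (2 ^ τ - 1) +
      (1 - Q i) *
        ((prefixFP τ B i + (2 ^ τ - 1)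
            - (2 ^ τ * (if i = 0 then 0 else prefixFP τ B (i - 1))) % (2 ^ τ - 1))
          % (2 ^ τ - 1)) :=
  block_eq_of_fp_and_marks_general τ N B hB Q hQ i hiN
end

section
/- Let B and B̂ be two block sequences of the same length N with values in {0,…,2^τ−1}. Suppose that for every 0 ≤ i < N we have (B[i] = q ⟺ B̂[i] = q), and that the corresponding prefix-fingerprint arrays agree at every position i with B[i] ≠ q (i.e., P'[i] = P̂'[i] whenever B[i] ≠ q). Then B = B̂. That is, the data stored by the structure (the sampled fingerprints at non-q blocks together with the set of positions of q-blocks) determines the text uniquely. -/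
open Finset

theorem Nat.sum_mul_pow_modEq_sum {ι : Type*} {b : ℕ} (hb : 1 ≤ b) (s : Finset ι)
    (f e : ι → ℕ) :
    ∑ j ∈ s, f j * b ^ e j ≡ ∑ j ∈ s, f j [MOD b - 1] :=
  Nat.ModEq.sum fun j _ => by
    simpa using (Nat.ModEq.refl (f j)).mul ((Nat.modEq_sub hb).pow (e j))

theorem eq_of_prefix_sum_modEq {m N : ℕ} {f g : ℕ → ℕ} {marked : ℕ → Prop}
    (h_marked : ∀ i < N, marked i → f i = g i)
    (hf : ∀ i < N, ¬ marked i → f i < m) (hg : ∀ i < N, ¬ marked i → g i < m)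
    (hsum : ∀ i < N, ¬ marked i →
      ∑ j ∈ range (i + 1), f j ≡ ∑ j ∈ range (i + 1), g j [MOD m]) :
    ∀ i < N, f i = g i := by
  intro i
  induction i using Nat.strong_induction_on with
  | _ i ih =>
    intro hi
    by_cases hmi : marked i
    · exact h_marked i hi hmi
    have hprefix : ∑ j ∈ range i, f j = ∑ j ∈ range i, g j :=
      sum_congr rfl fun j hj => ih j (mem_range.mp hj) ((mem_range.mp hj).trans hi)
    have hlast : f i ≡ g i [MOD m] := by
      have h := hsum i hi hmi
      rw [sum_range_succ, sum_range_succ, hprefix] at h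
      exact Nat.ModEq.add_left_cancel' _ h
    exact hlast.eq_of_lt_of_lt (hf i hi hmi) (hg i hi hmi)

theorem blocks_determined_by_fp_general (τ N : ℕ) (B B' : ℕ → ℕ)
    (hB : ∀ i < N, B i ≤ 2 ^ τ - 1) (hB' : ∀ i < N, B' i ≤ 2 ^ τ - 1)
    (hmark : ∀ i < N, (B i = 2 ^ τ - 1 ↔ B' i = 2 ^ τ - 1))
    (hfp : ∀ i < N, B i ≠ 2 ^ τ - 1 → prefixFP τ B i = prefixFP τ B' i) :
    ∀ i < N, B i = B' i := by
  refine eq_of_prefix_sum_modEq (marked := fun i => B i = 2 ^ τ - 1)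
    (fun i hi h => ?_) (fun i hi h => (hB i hi).lt_of_ne h)
    (fun i hi h => (hB' i hi).lt_of_ne (mt (hmark i hi).mpr h)) (fun i hi h => ?_)
  · rw [h, (hmark i hi).mp h]
  · rw [Nat.ModEq, ← prefixFP_eq_sum_mod, ← prefixFP_eq_sum_mod]
    exact hfp i hi h

/-- Let `τ ≥ 1`, `q = 2^τ − 1`, and let `B` and `B'` be two block sequences of
the same length `N` with values in `{0,…,2^τ−1}`.  Suppose that for every
`0 ≤ i < N` we have `B[i] = q ⟺ B'[i] = q`, and that the corresponding
prefix-fingerprint arrays agree at every position `i` with `B[i] ≠ q`.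
Then `B` and `B'` agree at every position `i < N`: the sampled fingerprints at
non-`q` blocks together with the set of positions of `q`-blocks determine the
text uniquely. -/
theorem blocks_determined_by_fp (τ N : ℕ) (hτ : 1 ≤ τ) (B B' : ℕ → ℕ)
    (hB : ∀ i < N, B i ≤ 2 ^ τ - 1) (hB' : ∀ i < N, B' i ≤ 2 ^ τ - 1)
    (hmark : ∀ i < N, (B i = 2 ^ τ - 1 ↔ B' i = 2 ^ τ - 1))
    (hfp : ∀ i < N, B i ≠ 2 ^ τ - 1 → prefixFP τ B i = prefixFP τ B' i) :
    ∀ i < N, B i = B' i :=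
  blocks_determined_by_fp_general τ N B B' hB hB' hmark hfp
end

section
/- Let b ≥ 1 and let c : ℕ → ℕ be a sequence with c(k) < 2^b − 1 for all k. Define the binary sequence T' : ℕ → {0,1} by T'(m) = ⌊c(⌊m/b⌋) / 2^(b−1−(m mod b))⌋ mod 2 (the concatenation of the b-bit big-endian representations of the c(k)). Then every window of 2b consecutive bits of T' contains a 0: for every i there exists j < 2b with T'(i + j) = 0. -/
/-!
Since `c k < 2^b - 1`, the `b`-bit word of every character has a zero bit. A window of `2b`
consecutive positions starting at `i` contains the whole word of the character `i / b + 1`,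
hence one of its zeros.
-/

theorem Nat.exists_lt_div_two_pow_mod_two_eq_zero {n b : ℕ} (hn : n < 2 ^ b - 1) :
    ∃ s < b, n / 2 ^ s % 2 = 0 := by
  induction b generalizing n with
  | zero => simp at hn
  | succ b ih =>
    rcases Nat.mod_two_eq_zero_or_one n with h | h
    · exact ⟨0, b.succ_pos, by simpa using h⟩
    · obtain ⟨s, hs, hbit⟩ := ih (n := n / 2) (by rw [pow_succ] at hn; omega)
      exact ⟨s + 1, by omega, by rwa [pow_succ', ← Nat.div_div_eq_div_mul]⟩

theorem Nat.le_mul_div_succ_and_mul_div_succ_le_add {i b : ℕ} (hb : 0 < b) :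
    i ≤ b * (i / b + 1) ∧ b * (i / b + 1) ≤ i + b := by
  have hlt : i < b * (i / b + 1) := Nat.lt_mul_div_succ i hb
  have hle : b * (i / b) ≤ i := Nat.mul_div_le i b
  rw [mul_add, mul_one] at hlt ⊢
  omega

theorem zero_in_every_window_general (b : ℕ) (c : ℕ → ℕ)
    (hc : ∀ k, c k < 2 ^ b - 1)
    (T' : ℕ → ℕ) (hT' : ∀ m, T' m = c (m / b) / 2 ^ (b - 1 - m % b) % 2) :
    ∀ i, ∃ j < 2 * b, T' (i + j) = 0 := by
  intro i
  obtain ⟨s, hs, hzero⟩ := Nat.exists_lt_div_two_pow_mod_two_eq_zero (hc (i / b + 1))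
  have hb : 0 < b := by omega
  obtain ⟨hstart, hend⟩ := Nat.le_mul_div_succ_and_mul_div_succ_le_add (i := i) hb
  have ht : b - 1 - s < b := by omega
  refine ⟨b * (i / b + 1) + (b - 1 - s) - i, by omega, ?_⟩
  rw [Nat.add_sub_cancel' (by omega), hT', Nat.mul_add_div hb, Nat.div_eq_of_lt ht,
    Nat.mul_add_mod, Nat.mod_eq_of_lt ht, add_zero, Nat.sub_sub_self (by omega)]
  exact hzero

/-- Let `b ≥ 1` and let `c : ℕ → ℕ` be a sequence of character codes with
`c(k) < 2^b − 1` for all `k`.  Define the binary sequence `T'` by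
`T'(m) = ⌊c(⌊m/b⌋) / 2^(b−1−(m mod b))⌋ mod 2` (the concatenation of the
`b`-bit big-endian representations of the `c(k)`).  Then every window of `2b`
consecutive bits of `T'` contains a `0`. -/
theorem zero_in_every_window (b : ℕ) (hb : 1 ≤ b) (c : ℕ → ℕ)
    (hc : ∀ k, c k < 2 ^ b - 1)
    (T' : ℕ → ℕ) (hT' : ∀ m, T' m = c (m / b) / 2 ^ (b - 1 - m % b) % 2) :
    ∀ i, ∃ j < 2 * b, T' (i + j) = 0 :=
  zero_in_every_window_general b c hc T' hT'
end

section
/- Let σ ≥ 2, let b be a positive integer with σ ≤ 2^b, and let T be a string of length n over {0,…,σ−1}. Let T' be the binary string of length n·b defined by T'[a·b + r] = ⌊T[a] / 2^(b−1−r)⌋ mod 2 for 0 ≤ a < n and 0 ≤ r < b. For a string S of length m and indices i, j < m, define LCE_S(i,j) as the largest ℓ with ℓ ≤ m − i and ℓ ≤ m − j such that S[i+k] = S[j+k] for all k < ℓ. Then for all 0 ≤ i, j < n, LCE_T(i,j) = ⌊LCE_{T'}(i·b, j·b) / b⌋. -/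
/-!
A character of `T` is encoded injectively by a block of `b` bits of `T'`, so the suffixes of `T'`
at `i·b` and `j·b` agree on their first `ℓ·b` bits exactly when the suffixes of `T` at `i` and `j`
agree on their first `ℓ` characters. Hence `ℓ ≤ LCE_T(i,j) ↔ ℓ·b ≤ LCE_{T'}(i·b,j·b)` for every
`ℓ`, and the right-hand side is `ℓ ≤ ⌊LCE_{T'}(i·b,j·b) / b⌋`.
-/

/-- `LCE S m i j` is the length of the longest common prefix of the suffixes
starting at positions `i` and `j` of the string of length `m` whose characters
are given by `S`: the largest `ℓ` with `ℓ ≤ m − i` and `ℓ ≤ m − j` such that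
`S (i+k) = S (j+k)` for all `k < ℓ`. -/
def LCE (S : ℕ → ℕ) (m i j : ℕ) : ℕ :=
  Nat.findGreatest (fun ℓ => ℓ ≤ m - i ∧ ℓ ≤ m - j ∧ ∀ k < ℓ, S (i + k) = S (j + k)) m

theorem le_LCE_iff {S : ℕ → ℕ} {m i j ℓ : ℕ} :
    ℓ ≤ LCE S m i j ↔ ℓ ≤ m - i ∧ ℓ ≤ m - j ∧ ∀ k < ℓ, S (i + k) = S (j + k) := by
  constructor
  · intro h
    obtain ⟨hi, hj, hS⟩ := Nat.findGreatest_spec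
      (P := fun ℓ => ℓ ≤ m - i ∧ ℓ ≤ m - j ∧ ∀ k < ℓ, S (i + k) = S (j + k))
      (Nat.zero_le m) ⟨Nat.zero_le _, Nat.zero_le _, nofun⟩
    exact ⟨h.trans hi, h.trans hj, fun k hk => hS k (hk.trans_le h)⟩
  · rintro ⟨hi, hj, hS⟩
    exact Nat.le_findGreatest (hi.trans (Nat.sub_le m i)) ⟨hi, hj, hS⟩

theorem forall_lt_mul_iff {ℓ b : ℕ} {P : ℕ → Prop} :
    (∀ k < ℓ * b, P k) ↔ ∀ q < ℓ, ∀ r < b, P (q * b + r) := by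
  constructor
  · intro h q hq r hr
    apply h
    calc q * b + r < (q + 1) * b := by rw [add_mul, one_mul]; omega
      _ ≤ ℓ * b := Nat.mul_le_mul_right b hq
  · intro h k hk
    have hb : 0 < b := Nat.pos_of_mul_pos_left (Nat.zero_lt_of_lt hk)
    rw [← Nat.div_add_mod' k b]
    exact h _ ((Nat.div_lt_iff_lt_mul hb).2 hk) _ (Nat.mod_lt k hb)

theorem Nat.eq_of_bits_eq {b x y : ℕ} (hx : x < 2 ^ b) (hy : y < 2 ^ b)
    (h : ∀ r < b, x / 2 ^ (b - 1 - r) % 2 = y / 2 ^ (b - 1 - r) % 2) : x = y := by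
  refine Nat.eq_of_testBit_eq fun s => ?_
  by_cases hs : s < b
  · have hbit := h (b - 1 - s) (by omega)
    rw [show b - 1 - (b - 1 - s) = s by omega] at hbit
    rw [Nat.testBit_eq_decide_div_mod_eq, Nat.testBit_eq_decide_div_mod_eq, hbit]
  · have hpow : 2 ^ b ≤ 2 ^ s := Nat.pow_le_pow_right two_pos (not_lt.1 hs)
    rw [Nat.testBit_lt_two_pow (hx.trans_le hpow), Nat.testBit_lt_two_pow (hy.trans_le hpow)]

section BlockEncoding

variable {σ b n : ℕ} {T T' : ℕ → ℕ} {enc : ℕ → ℕ → ℕ}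

theorem common_prefix_blockEncode_iff (hb : 0 < b) (hT : ∀ a < n, T a < σ)
    (henc : ∀ x < σ, ∀ y < σ, (∀ r < b, enc x r = enc y r) → x = y)
    (hT' : ∀ a < n, ∀ r < b, T' (a * b + r) = enc (T a) r) (i j ℓ : ℕ) :
    (ℓ * b ≤ n * b - i * b ∧ ℓ * b ≤ n * b - j * b ∧
        ∀ k < ℓ * b, T' (i * b + k) = T' (j * b + k)) ↔
      ℓ ≤ n - i ∧ ℓ ≤ n - j ∧ ∀ k < ℓ, T (i + k) = T (j + k) := by
  simp only [← Nat.sub_mul, Nat.mul_le_mul_right_iff hb, forall_lt_mul_iff]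
  refine and_congr_right fun hi => and_congr_right fun hj => forall₂_congr fun q hq => ?_
  have hblock : ∀ c, c + q < n → ∀ r < b, T' (c * b + (q * b + r)) = enc (T (c + q)) r :=
    fun c hc r hr => by rw [← add_assoc, ← add_mul]; exact hT' _ hc r hr
  have hiq : i + q < n := by omega
  have hjq : j + q < n := by omega
  constructor
  · intro h
    refine henc _ (hT _ hiq) _ (hT _ hjq) fun r hr => ?_
    rw [← hblock i hiq r hr, ← hblock j hjq r hr, h r hr]
  · intro h r hr
    rw [hblock i hiq r hr, hblock j hjq r hr, h]

theorem LCE_eq_LCE_blockEncode_div (hb : 0 < b) (hT : ∀ a < n, T a < σ)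
    (henc : ∀ x < σ, ∀ y < σ, (∀ r < b, enc x r = enc y r) → x = y)
    (hT' : ∀ a < n, ∀ r < b, T' (a * b + r) = enc (T a) r) (i j : ℕ) :
    LCE T n i j = LCE T' (n * b) (i * b) (j * b) / b :=
  eq_of_forall_le_iff fun ℓ => by
    rw [Nat.le_div_iff_mul_le hb, le_LCE_iff, le_LCE_iff,
      common_prefix_blockEncode_iff hb hT henc hT']

end BlockEncoding

theorem lce_binary_reduction_general (σ b n : ℕ) (hb : 1 ≤ b)
    (hσb : σ ≤ 2 ^ b) (T : ℕ → ℕ) (hT : ∀ a < n, T a < σ)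
    (T' : ℕ → ℕ)
    (hT' : ∀ a < n, ∀ r < b, T' (a * b + r) = T a / 2 ^ (b - 1 - r) % 2) :
    ∀ i < n, ∀ j < n, LCE T n i j = LCE T' (n * b) (i * b) (j * b) / b :=
  fun i _ j _ => LCE_eq_LCE_blockEncode_div hb hT
    (fun _ hx _ hy => Nat.eq_of_bits_eq (hx.trans_le hσb) (hy.trans_le hσb)) hT' i j

/-- Let `σ ≥ 2`, let `b ≥ 1` with `σ ≤ 2^b`, and let `T` be a string of length
`n` over `{0,…,σ−1}`.  Let `T'` be the binary string of length `n·b` defined by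
`T'[a·b + r] = ⌊T[a] / 2^(b−1−r)⌋ mod 2` for `0 ≤ a < n`, `0 ≤ r < b` (the
concatenation of the `b`-bit big-endian representations of the characters of
`T`).  Then for all `0 ≤ i, j < n`,
`LCE_T(i,j) = ⌊LCE_{T'}(i·b, j·b) / b⌋`. -/
theorem lce_binary_reduction (σ b n : ℕ) (hσ : 2 ≤ σ) (hb : 1 ≤ b)
    (hσb : σ ≤ 2 ^ b) (T : ℕ → ℕ) (hT : ∀ a < n, T a < σ)
    (T' : ℕ → ℕ)
    (hT' : ∀ a < n, ∀ r < b, T' (a * b + r) = T a / 2 ^ (b - 1 - r) % 2) :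
    ∀ i < n, ∀ j < n, LCE T n i j = LCE T' (n * b) (i * b) (j * b) / b :=
  lce_binary_reduction_general σ b n hb hσb T hT T' hT'
end
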